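/- arXiv:1603.05116 — 2 statements merged into one kernel-verified Lean document; each statement's English description precedes it below -/
import Mathlib

section
/- Let G be a finite simple graph and let e be an edge of G. Then the Grundy domination number of the graph G - e obtained by deleting the edge e satisfies γ_gr(G - e) ≤ γ_gr(G) + 1. -/
/-- The closed neighborhood `N[v] = {v} ∪ N(v)` of a vertex. -/
def closedNbhd {V : Type*} (G : SimpleGraph V) (v : V) : Set V :=
  insert v (G.neighborSet v)

/-- A sequence (list) of pairwise distinct vertices is legal if each vertex
footprints some vertex not dominated by the previous ones. -/
def IsLegalSeq {V : Type*} (G : SimpleGraph V) (l : List V) : Prop :=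
  l.Nodup ∧ ∀ i : Fin l.length, ∃ u,
    u ∈ closedNbhd G (l.get i) ∧
    ∀ j : Fin l.length, (j : ℕ) < (i : ℕ) → u ∉ closedNbhd G (l.get j)

/-- A legal dominating sequence. -/
def IsDomSeq {V : Type*} (G : SimpleGraph V) (l : List V) : Prop :=
  IsLegalSeq G l ∧ ∀ u : V, ∃ v ∈ l, u ∈ closedNbhd G v

/-- The Grundy domination number: the maximum length of a legal dominating sequence. -/
noncomputable def grundyDomNum {V : Type*} (G : SimpleGraph V) : ℕ :=
  sSup {k : ℕ | ∃ l : List V, IsDomSeq G l ∧ l.length = k}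

/-! Let `l = (v₁, …, vₖ)` be a legal sequence of `G - e` and let `uᵢ` be a footprint of `vᵢ`. In `G`,
`uᵢ` can only become dominated by an earlier `vⱼ` through the edge `e`, i.e. when `{vⱼ, uᵢ} = e`.
This happens for at most one step: footprints of distinct steps differ, so two such steps `i ≠ i'`
would need `uᵢ = vⱼ'` and `uᵢ' = vⱼ`, forcing `i ≤ j' < i' ≤ j < i`. Deleting the vertex of that
step leaves a legal sequence of `G`, and every legal sequence extends greedily to a legal
dominating one. -/

section

variable {V : Type*} {G : SimpleGraph V} {l : List V}

lemma mem_closedNbhd {v u : V} : u ∈ closedNbhd G v ↔ u = v ∨ G.Adj v u := Iff.rfl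

lemma self_mem_closedNbhd (G : SimpleGraph V) (v : V) : v ∈ closedNbhd G v :=
  Set.mem_insert v _

lemma closedNbhd_mono {G' : SimpleGraph V} (h : G' ≤ G) (v : V) :
    closedNbhd G' v ⊆ closedNbhd G v :=
  Set.insert_subset_insert fun _ hu => h hu

lemma sym2_eq_of_mem_closedNbhd_of_notMem_deleteEdges {e : Sym2 V} {v u : V}
    (hG : u ∈ closedNbhd G v) (he : u ∉ closedNbhd (G.deleteEdges {e}) v) : s(v, u) = e := by
  rw [mem_closedNbhd] at hG he
  push Not at he
  rcases hG with rfl | hadj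
  · exact absurd rfl he.1
  · by_contra hne
    exact he.2 (SimpleGraph.deleteEdges_adj.mpr ⟨hadj, Set.mem_singleton_iff.not.mpr hne⟩)

def IsFootprint (G : SimpleGraph V) (l : List V) (i : Fin l.length) (u : V) : Prop :=
  u ∈ closedNbhd G (l.get i) ∧ ∀ j : Fin l.length, (j : ℕ) < i → u ∉ closedNbhd G (l.get j)

lemma isLegalSeq_iff : IsLegalSeq G l ↔ l.Nodup ∧ ∀ i, ∃ u, IsFootprint G l i u := Iff.rfl

namespace IsFootprint

variable {i i' j j' : Fin l.length} {u u' : V}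

lemma le_of_eq_get (hu : IsFootprint G l i u) (h : u = l.get j) : (i : ℕ) ≤ j :=
  not_lt.mp fun hji => hu.2 j hji (h ▸ self_mem_closedNbhd G _)

lemma eq_of_eq (hu : IsFootprint G l i u) (hu' : IsFootprint G l i' u) : i = i' := by
  rcases lt_trichotomy (i : ℕ) i' with h | h | h
  · exact absurd hu.1 (hu'.2 i h)
  · exact Fin.ext h
  · exact absurd hu'.1 (hu.2 i' h)

lemma eq_of_sym2_eq (hu : IsFootprint G l i u) (hu' : IsFootprint G l i' u')
    (hji : (j : ℕ) < i) (hji' : (j' : ℕ) < i') (h : s(l.get j, u) = s(l.get j', u')) : i = i' := by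
  rcases Sym2.eq_iff.mp h with ⟨-, rfl⟩ | ⟨hj, hu'j⟩
  · exact hu.eq_of_eq hu'
  · have := hu.le_of_eq_get hu'j
    have := hu'.le_of_eq_get hj.symm
    omega

lemma of_deleteEdges {e : Sym2 V} (hu : IsFootprint (G.deleteEdges {e}) l i u)
    (he : ∀ j : Fin l.length, (j : ℕ) < i → s(l.get j, u) ≠ e) : IsFootprint G l i u :=
  ⟨closedNbhd_mono (G.deleteEdges_le _) _ hu.1, fun j hj hG =>
    he j hj (sym2_eq_of_mem_closedNbhd_of_notMem_deleteEdges hG (hu.2 j hj))⟩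

end IsFootprint

lemma isLegalSeq_of_sublist {l' : List V} (h : l'.Sublist l) (hnd : l.Nodup)
    (hfp : ∀ i : Fin l.length, l.get i ∈ l' → ∃ u, IsFootprint G l i u) : IsLegalSeq G l' := by
  obtain ⟨f, hf⟩ := List.sublist_iff_exists_fin_orderEmbedding_get_eq.mp h
  refine ⟨h.nodup hnd, fun i => ?_⟩
  obtain ⟨u, hu, hprev⟩ := hfp (f i) (hf i ▸ List.get_mem _ _)
  exact ⟨u, hf i ▸ hu, fun j hj => hf j ▸ hprev (f j) (f.lt_iff_lt.mpr hj)⟩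

namespace IsLegalSeq

lemma exists_isLegalSeq_of_deleteEdges {e : Sym2 V} (hl : IsLegalSeq (G.deleteEdges {e}) l) :
    ∃ l', IsLegalSeq G l' ∧ l.length ≤ l'.length + 1 := by
  classical
  obtain ⟨hnd, hfp⟩ := isLegalSeq_iff.mp hl
  choose u hu using hfp
  by_cases hbad : ∃ i j : Fin l.length, (j : ℕ) < i ∧ s(l.get j, u i) = e
  · obtain ⟨i, j, hji, rfl⟩ := hbad
    refine ⟨l.erase (l.get i), isLegalSeq_of_sublist l.erase_sublist hnd fun m hm => ?_, ?_⟩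
    · have hmi : m ≠ i := fun h => (hnd.mem_erase_iff.mp hm).1 (congrArg l.get h)
      exact ⟨u m, (hu m).of_deleteEdges fun j' hj' h =>
        hmi ((hu m).eq_of_sym2_eq (hu i) hj' hji h)⟩
    · rw [List.length_erase_of_mem (List.get_mem _ _)]
      omega
  · push Not at hbad
    exact ⟨l, isLegalSeq_of_sublist (List.Sublist.refl l) hnd fun m _ =>
      ⟨u m, (hu m).of_deleteEdges (hbad m)⟩, Nat.le_succ _⟩

lemma concat {w : V} (hl : IsLegalSeq G l) (hw : ∀ v ∈ l, w ∉ closedNbhd G v) :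
    IsLegalSeq G (l ++ [w]) := by
  have hget : ∀ k : Fin (l ++ [w]).length, (hk : (k : ℕ) < l.length) →
      (l ++ [w]).get k = l.get ⟨k, hk⟩ := fun k hk => List.getElem_append_left hk
  have hnd : (l ++ [w]).Nodup := by
    rw [← List.concat_eq_append]
    exact hl.1.concat fun hwl => hw w hwl (self_mem_closedNbhd G w)
  refine ⟨hnd, fun i => ?_⟩
  by_cases hi : (i : ℕ) < l.length
  · obtain ⟨u, hu, hprev⟩ := hl.2 ⟨i, hi⟩
    exact ⟨u, hget i hi ▸ hu, fun j hj => hget j (hj.trans hi) ▸ hprev _ hj⟩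
  · have hwi : (l ++ [w]).get i = w := by
      simp only [List.get_eq_getElem, List.getElem_append_right (not_lt.mp hi)]
      simp
    refine ⟨w, by rw [hwi]; exact self_mem_closedNbhd G w, fun j hj => ?_⟩
    have hjl : (j : ℕ) < l.length := by
      have := i.isLt
      simp only [List.length_append, List.length_singleton] at this
      omega
    exact hget j hjl ▸ hw _ (List.get_mem _ _)

variable [Fintype V]

lemma exists_isDomSeq_append (hl : IsLegalSeq G l) : ∃ t, IsDomSeq G (l ++ t) := by
  induction hn : Fintype.card V - l.length using Nat.strong_induction_on generalizing l with
  | _ n ih =>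
    by_cases hdom : ∀ w, ∃ v ∈ l, w ∈ closedNbhd G v
    · exact ⟨[], by simpa using ⟨hl, hdom⟩⟩
    · push Not at hdom
      obtain ⟨w, hw⟩ := hdom
      have hlw := hl.concat hw
      have hlt : Fintype.card V - (l ++ [w]).length < n := by
        have := hlw.1.length_le_card
        simp only [List.length_append, List.length_singleton] at this ⊢
        omega
      obtain ⟨t, ht⟩ := ih _ hlt hlw rfl
      exact ⟨w :: t, by rw [List.append_cons]; exact ht⟩

lemma length_le_grundyDomNum (hl : IsLegalSeq G l) : l.length ≤ grundyDomNum G := by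
  obtain ⟨t, ht⟩ := hl.exists_isDomSeq_append
  have hbdd : BddAbove {k | ∃ l : List V, IsDomSeq G l ∧ l.length = k} :=
    ⟨Fintype.card V, by rintro k ⟨l, hl, rfl⟩; exact hl.1.1.length_le_card⟩
  calc l.length ≤ (l ++ t).length := by simp
    _ ≤ grundyDomNum G := le_csSup hbdd ⟨_, ht, rfl⟩

end IsLegalSeq

end

theorem grundy_edge_deletion_upper_general {V : Type*} [Fintype V] (G : SimpleGraph V)
    (e : Sym2 V) :
    grundyDomNum (G.deleteEdges {e}) ≤ grundyDomNum G + 1 := by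
  refine csSup_le' ?_
  rintro k ⟨l, hl, rfl⟩
  obtain ⟨l', hl', hlen⟩ := hl.1.exists_isLegalSeq_of_deleteEdges
  have := hl'.length_le_grundyDomNum
  omega

theorem grundy_edge_deletion_upper {V : Type*} [Fintype V] (G : SimpleGraph V)
    (e : Sym2 V) (he : e ∈ G.edgeSet) :
    grundyDomNum (G.deleteEdges {e}) ≤ grundyDomNum G + 1 :=
  grundy_edge_deletion_upper_general G e
end

section
/- Let G be a finite simple graph and let u be a vertex of G. Then the Grundy domination number of the graph G - u obtained by deleting u (the induced subgraph on V(G) \ {u}) satisfies γ_gr(G - u) ≥ γ_gr(G) - 2. -/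
/-
Take a longest legal dominating sequence of `G` and throw away `u` itself and the first
vertex of the sequence dominating `u`, if any. Every other vertex still has a footprint
different from `u`: a vertex whose only new neighbour is `u` is the first to dominate `u`.
Deleting vertices from a legal sequence keeps it legal, since the earlier neighbourhoods
only shrink, so what is left is a legal sequence of `G - u` of length at least
`γ_gr(G) - 2`. Finally every legal sequence of a finite graph extends to a legal
dominating one, by appending undominated vertices.
-/

section LegalFrom

variable {V : Type*} {G : SimpleGraph V}

def LegalFrom (G : SimpleGraph V) : Set V → List V → Prop
  | _, [] => True
  | D, v :: t => (∃ w ∈ closedNbhd G v, w ∉ D) ∧ LegalFrom G (D ∪ closedNbhd G v) t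

theorem legalFrom_iff_forall_get {D : Set V} {l : List V} :
    LegalFrom G D l ↔ ∀ i : Fin l.length, ∃ w, w ∈ closedNbhd G (l.get i) ∧ w ∉ D ∧
      ∀ j : Fin l.length, (j : ℕ) < (i : ℕ) → w ∉ closedNbhd G (l.get j) := by
  induction l generalizing D with
  | nil => simp [LegalFrom]
  | cons v t ih =>
    simp [LegalFrom, ih, Fin.forall_fin_succ, and_assoc]

theorem LegalFrom.of_sublist_of_subset {D D' : Set V} {l l' : List V} (h : LegalFrom G D l)
    (hl : l'.Sublist l) (hD : D' ⊆ D) : LegalFrom G D' l' := by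
  induction hl generalizing D D' with
  | slnil => trivial
  | cons v _ ih => exact ih h.2 (hD.trans Set.subset_union_left)
  | cons_cons v _ ih =>
    obtain ⟨⟨w, hw, hwD⟩, ht⟩ := h
    exact ⟨⟨w, hw, fun hwD' => hwD (hD hwD')⟩, ih ht (Set.union_subset_union_left _ hD)⟩

theorem LegalFrom.exists_mem_closedNbhd_notMem {D : Set V} {l : List V} (h : LegalFrom G D l)
    {v : V} (hv : v ∈ l) : ∃ w ∈ closedNbhd G v, w ∉ D :=
  (h.of_sublist_of_subset (List.singleton_sublist.mpr hv) le_rfl).1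

theorem LegalFrom.nodup {D : Set V} {l : List V} (h : LegalFrom G D l) : l.Nodup := by
  induction l generalizing D with
  | nil => exact List.nodup_nil
  | cons v t ih =>
    refine List.nodup_cons.mpr ⟨fun hv => ?_, ih h.2⟩
    obtain ⟨w, hw, hwD⟩ := h.2.exists_mem_closedNbhd_notMem hv
    exact hwD (Or.inr hw)

theorem isLegalSeq_iff_legalFrom {l : List V} : IsLegalSeq G l ↔ LegalFrom G ∅ l := by
  have hlegal : LegalFrom G ∅ l ↔ _ := legalFrom_iff_forall_get
  simp only [Set.notMem_empty, not_false_eq_true, true_and] at hlegal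
  rw [IsLegalSeq, hlegal]
  exact ⟨And.right, fun h => ⟨(hlegal.mpr h).nodup, h⟩⟩

theorem LegalFrom.append_singleton {D : Set V} {l : List V} (h : LegalFrom G D l) {x : V}
    (hxD : x ∉ D) (hxl : ∀ v ∈ l, x ∉ closedNbhd G v) : LegalFrom G D (l ++ [x]) := by
  induction l generalizing D with
  | nil => exact ⟨⟨x, Set.mem_insert x _, hxD⟩, trivial⟩
  | cons v t ih =>
    refine ⟨h.1, ih h.2 ?_ fun w hw => hxl w (List.mem_cons_of_mem v hw)⟩
    rintro (hx | hx)
    exacts [hxD hx, hxl v List.mem_cons_self hx]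

theorem LegalFrom.exists_isDomSeq [Finite V] {l : List V} (h : LegalFrom G ∅ l) :
    ∃ l', IsDomSeq G l' ∧ l.length ≤ l'.length := by
  by_cases hdom : ∀ x, ∃ v ∈ l, x ∈ closedNbhd G v
  · exact ⟨l, ⟨isLegalSeq_iff_legalFrom.mpr h, hdom⟩, le_rfl⟩
  push Not at hdom
  obtain ⟨x, hx⟩ := hdom
  have hext := h.append_singleton (Set.notMem_empty x) hx
  have hcard := hext.nodup.length_le_natCard
  obtain ⟨l', hl', hlen⟩ := hext.exists_isDomSeq
  exact ⟨l', hl', by simp only [List.length_append, List.length_singleton] at hlen; omega⟩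
termination_by Nat.card V - l.length
decreasing_by simp only [List.length_append, List.length_singleton] at hcard ⊢; omega

end LegalFrom

section GrundyDomNum

variable {V : Type*} [Finite V] {G : SimpleGraph V}

theorem bddAbove_domSeq_lengths :
    BddAbove {k : ℕ | ∃ l : List V, IsDomSeq G l ∧ l.length = k} :=
  ⟨Nat.card V, fun _ ⟨_, hl, hk⟩ => hk ▸ hl.1.1.length_le_natCard⟩

theorem LegalFrom.length_le_grundyDomNum {l : List V} (h : LegalFrom G ∅ l) :
    l.length ≤ grundyDomNum G := by
  obtain ⟨l', hl', hlen⟩ := h.exists_isDomSeq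
  exact hlen.trans (le_csSup bddAbove_domSeq_lengths ⟨l', hl', rfl⟩)

theorem exists_isDomSeq_length_eq_grundyDomNum :
    ∃ l : List V, IsDomSeq G l ∧ l.length = grundyDomNum G := by
  obtain ⟨l, hl, -⟩ := (show LegalFrom G ∅ [] from trivial).exists_isDomSeq
  exact Nat.sSup_mem (s := {k | ∃ l : List V, IsDomSeq G l ∧ l.length = k}) ⟨_, l, hl, rfl⟩
    bddAbove_domSeq_lengths

end GrundyDomNum

section VertexDeletion

variable {V : Type*} {G : SimpleGraph V}

theorem LegalFrom.exists_legalFrom_insert {D : Set V} {l : List V} (h : LegalFrom G D l)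
    (u : V) : ∃ l' : List V, l.length ≤ l'.length + 1 ∧ LegalFrom G (insert u D) l' := by
  induction l generalizing D with
  | nil => exact ⟨[], by simp, trivial⟩
  | cons v t ih =>
    obtain ⟨⟨w, hw, hwD⟩, ht⟩ := h
    by_cases hfoot : ∃ w ∈ closedNbhd G v, w ∉ insert u D
    · obtain ⟨t', hlen, ht'⟩ := ih ht
      refine ⟨v :: t', by simpa using hlen, hfoot, ?_⟩
      rwa [Set.insert_union]
    · -- all new footprints of `v` are `u`, which is dominated from now on
      push Not at hfoot
      have hu : u ∈ closedNbhd G v := by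
        obtain rfl | hwD' := hfoot w hw
        exacts [hw, absurd hwD' hwD]
      refine ⟨t, by simp, ht.of_sublist_of_subset (List.Sublist.refl t) ?_⟩
      exact Set.insert_subset (Or.inr hu) Set.subset_union_left

theorem closedNbhd_induce (s : Set V) (v : s) :
    closedNbhd (G.induce s) v = Subtype.val ⁻¹' closedNbhd G v := by
  ext w
  simp [closedNbhd, Subtype.ext_iff]

theorem LegalFrom.induce {s D : Set V} {l : List s}
    (h : LegalFrom G (D ∪ sᶜ) (l.map Subtype.val)) :
    LegalFrom (G.induce s) (Subtype.val ⁻¹' D) l := by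
  induction l generalizing D with
  | nil => trivial
  | cons v t ih =>
    obtain ⟨⟨w, hw, hwD⟩, ht⟩ := h
    simp only [Set.mem_union, Set.mem_compl_iff, not_or, not_not] at hwD
    refine ⟨⟨⟨w, hwD.2⟩, by simpa [closedNbhd_induce] using hw, hwD.1⟩, ?_⟩
    rw [closedNbhd_induce, ← Set.preimage_union]
    exact ih (by rwa [Set.union_right_comm])

end VertexDeletion

theorem grundy_vertex_deletion_lower {V : Type*} [Fintype V] (G : SimpleGraph V)
    (u : V) :
    grundyDomNum G - 2 ≤ grundyDomNum (G.induce {v : V | v ≠ u}) := by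
  classical
  obtain ⟨l, hl, hlen⟩ := exists_isDomSeq_length_eq_grundyDomNum (G := G)
  obtain ⟨l₁, hlen₁, hlegal₁⟩ :=
    (isLegalSeq_iff_legalFrom.mp hl.1).exists_legalFrom_insert u
  have hlegal₂ : LegalFrom G {u} (l₁.erase u) :=
    hlegal₁.of_sublist_of_subset l₁.erase_sublist (by simp)
  have hne : ∀ v ∈ l₁.erase u, v ∈ {v : V | v ≠ u} := fun v hv =>
    ((hlegal₁.nodup.mem_erase_iff).mp hv).1
  have hlen₂ : l₁.length ≤ (l₁.erase u).length + 1 := by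
    rw [List.length_erase]; split_ifs <;> omega
  lift l₁.erase u to List {v : V | v ≠ u} using hne with l₂
  have hdel : LegalFrom (G.induce {v : V | v ≠ u}) ∅ l₂ :=
    LegalFrom.induce (D := ∅) (by simpa [Set.compl_def] using hlegal₂)
  have hle := hdel.length_le_grundyDomNum
  rw [List.length_map] at hlen₂
  omega
end
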